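/- arXiv:1205.6024 — 3 statements merged into one kernel-verified Lean document; each statement's English description precedes it below -/
import Mathlib

section
/- Independent influence is dominated by unconditional influence: for a seed set S, a node k ∉ S, and any node j, the independent influence f_{kj}^{(S)} = (Γ_{S̄S̄}⁻¹)_{jk} / (Γ_{S̄S̄}⁻¹)_{kk} satisfies f_{kj}^{(S)} ≤ f_{kj} = p_{jk}/p_{kk}. -/
/-!
A Z-matrix `A` with positive row sums obeys a discrete minimum principle: if `(A w) i ≥ 0` off a
set `K` and `w ≥ 0` on `K`, then `w ≥ 0`, since at a minimum point `m` of `w` one has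
`(A w) m ≤ (∑ j, A m j) * w m`. Hence `A` is invertible with nonnegative inverse, and so is each
of its principal submatrices. Let `u` be the `k`-th column of `Γ⁻¹` and `v` the `k`-th column of
`Γ_{S̄S̄}⁻¹` extended by zero on `S`, both normalised to `1` at `k`, so that `u j = f_{kj}` and
`v j = f_{kj}^{(S)}`. Then `Γ (u - v)` vanishes on `S̄ \ {k}` and is nonnegative on `S` (there
`v = 0`, and the off-diagonal entries of `Γ` are nonpositive), while `(u - v) k = 0`; the minimum
principle gives `v ≤ u`.
-/

open Finset Matrix

noncomputable def indInf {n : ℕ} (Γ : Matrix (Fin n) (Fin n) ℝ) (S : Finset (Fin n))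
    (k j : Fin n) : ℝ :=
  if h : k ∉ S ∧ j ∉ S then
    ((Γ.submatrix (Subtype.val : {i : Fin n // i ∉ S} → Fin n) (Subtype.val : {i : Fin n // i ∉ S} → Fin n))⁻¹
        ⟨j, h.2⟩ ⟨k, h.1⟩) /
    ((Γ.submatrix (Subtype.val : {i : Fin n // i ∉ S} → Fin n) (Subtype.val : {i : Fin n // i ∉ S} → Fin n))⁻¹
        ⟨k, h.1⟩ ⟨k, h.1⟩)
  else 0

namespace Matrix

variable {ι ι' : Type*} [Fintype ι] [Fintype ι']

theorem mulVec_extend_apply (A : Matrix ι ι ℝ) {f : ι' → ι} (hf : Function.Injective f)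
    (x : ι' → ℝ) (i : ι) :
    (A *ᵥ Function.extend f x 0) i = ∑ j, A i (f j) * x j := by
  refine (Fintype.sum_of_injective f hf _ _ (fun j hj => ?_) (fun j => ?_)).symm
  · rw [Function.extend_apply' _ _ _ (by simpa using hj), Pi.zero_apply, mul_zero]
  · rw [hf.extend_apply]

theorem mulVec_inv_col [DecidableEq ι] {A : Matrix ι ι ℝ} (hA : IsUnit A.det) (k : ι) :
    A *ᵥ A⁻¹.col k = Pi.single k 1 := by
  rw [← mulVec_single_one, mulVec_mulVec, mul_nonsing_inv _ hA, one_mulVec]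

/-- Strictly row diagonally dominant, hence a nonsingular M-matrix. -/
structure IsRowDominantZMatrix (A : Matrix ι ι ℝ) : Prop where
  offDiag_nonpos : Pairwise fun i j => A i j ≤ 0
  sum_row_pos : ∀ i, 0 < ∑ j, A i j

namespace IsRowDominantZMatrix

variable {A : Matrix ι ι ℝ} (hA : A.IsRowDominantZMatrix)
include hA

theorem mulVec_apply_le_mul_diag {w : ι → ℝ} (hw : 0 ≤ w) (i : ι) :
    (A *ᵥ w) i ≤ A i i * w i := by
  classical
  rw [mulVec, dotProduct, ← Finset.add_sum_erase _ _ (mem_univ i), add_le_iff_nonpos_right]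
  exact Finset.sum_nonpos fun j hj =>
    mul_nonpos_of_nonpos_of_nonneg (hA.offDiag_nonpos (Finset.ne_of_mem_erase hj).symm) (hw j)

theorem mulVec_apply_le_sum_row_mul_of_min {w : ι → ℝ} {m : ι} (hm : ∀ j, w m ≤ w j) :
    (A *ᵥ w) m ≤ (∑ j, A m j) * w m := by
  rw [mulVec, dotProduct, Finset.sum_mul]
  refine Finset.sum_le_sum fun j _ => ?_
  rcases eq_or_ne m j with rfl | hmj
  · rfl
  · exact mul_le_mul_of_nonpos_left (hm j) (hA.offDiag_nonpos hmj)

theorem nonneg_of_mulVec_nonneg (K : Set ι) {w : ι → ℝ} (hout : ∀ i ∉ K, 0 ≤ (A *ᵥ w) i)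
    (hin : ∀ i ∈ K, 0 ≤ w i) : 0 ≤ w := by
  intro j
  by_contra! hj
  obtain ⟨m, -, hm⟩ := Finset.exists_min_image univ w ⟨j, mem_univ j⟩
  have hwm : w m < 0 := (hm j (mem_univ j)).trans_lt hj
  have hmK : m ∉ K := fun h => hwm.not_ge (hin m h)
  have := hA.mulVec_apply_le_sum_row_mul_of_min (fun j => hm j (mem_univ j))
  nlinarith [hout m hmK, hA.sum_row_pos m]

theorem submatrix {f : ι' → ι} (hf : Function.Injective f) :
    (A.submatrix f f).IsRowDominantZMatrix := by
  classical
  refine ⟨fun i j hij => hA.offDiag_nonpos (hf.ne hij), fun i => ?_⟩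
  set s := univ.map ⟨f, hf⟩
  have hout : ∑ j ∈ sᶜ, A (f i) j ≤ 0 := Finset.sum_nonpos fun j hj =>
    hA.offDiag_nonpos fun h => by simp [s, ← h] at hj
  have := hA.sum_row_pos (f i)
  rw [← Finset.sum_add_sum_compl s, Finset.sum_map] at this
  exact lt_of_lt_of_le this (add_le_of_nonpos_right hout)

variable [DecidableEq ι]

theorem det_ne_zero : A.det ≠ 0 := by
  refine det_ne_zero_of_sum_row_lt_diag fun k => ?_
  have hoff : ∀ j ∈ univ.erase k, ‖A k j‖ = -A k j := fun j hj =>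
    Real.norm_of_nonpos (hA.offDiag_nonpos (Finset.ne_of_mem_erase hj).symm)
  have := hA.sum_row_pos k
  rw [← Finset.add_sum_erase _ _ (mem_univ k)] at this
  rw [Finset.sum_congr rfl hoff, Finset.sum_neg_distrib]
  exact (neg_lt_iff_pos_add.2 this).trans_le (Real.le_norm_self _)

theorem isUnit_det : IsUnit A.det := isUnit_iff_ne_zero.2 hA.det_ne_zero

theorem inv_nonneg (i j : ι) : 0 ≤ A⁻¹ i j :=
  hA.nonneg_of_mulVec_nonneg ∅ (w := A⁻¹.col j)
    (fun i _ => by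
      rw [mulVec_inv_col hA.isUnit_det]
      exact (Pi.single_nonneg (α := fun _ => ℝ)).2 zero_le_one i)
    (by simp) i

theorem inv_diag_pos (k : ι) : 0 < A⁻¹ k k := by
  have h := hA.mulVec_apply_le_mul_diag (w := A⁻¹.col k) (fun i => hA.inv_nonneg i k) k
  rw [mulVec_inv_col hA.isUnit_det, Pi.single_eq_same] at h
  exact (hA.inv_nonneg k k).lt_of_ne fun h0 => by simp [← h0] at h; linarith

theorem inv_submatrix_div_le [DecidableEq ι'] {f : ι' → ι} (hf : Function.Injective f)
    (j k : ι') :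
    (A.submatrix f f)⁻¹ j k / (A.submatrix f f)⁻¹ k k ≤ A⁻¹ (f j) (f k) / A⁻¹ (f k) (f k) := by
  set B := A.submatrix f f
  have hB := hA.submatrix hf
  set u : ι → ℝ := (A⁻¹ (f k) (f k))⁻¹ • A⁻¹.col (f k)
  set x : ι' → ℝ := (B⁻¹ k k)⁻¹ • B⁻¹.col k
  set v : ι → ℝ := Function.extend f x 0
  have hu_diag : u (f k) = 1 := inv_mul_cancel₀ (hA.inv_diag_pos (f k)).ne'
  have hv_diag : v (f k) = 1 := by
    simp only [v, hf.extend_apply]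
    exact inv_mul_cancel₀ (hB.inv_diag_pos k).ne'
  have hAu : ∀ i ≠ f k, (A *ᵥ u) i = 0 := fun i hi => by
    rw [mulVec_smul, Pi.smul_apply, mulVec_inv_col hA.isUnit_det, Pi.single_eq_of_ne hi,
      smul_zero]
  have hAv_range : ∀ i ≠ k, (A *ᵥ v) (f i) = 0 := fun i hi => by
    rw [mulVec_extend_apply A hf]
    change (B *ᵥ x) i = 0
    rw [mulVec_smul, Pi.smul_apply, mulVec_inv_col hB.isUnit_det, Pi.single_eq_of_ne hi,
      smul_zero]
  have hv_nonneg : 0 ≤ v := fun i => by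
    by_cases hi : ∃ a, f a = i
    · obtain ⟨a, rfl⟩ := hi
      simp only [v, hf.extend_apply]
      exact mul_nonneg (_root_.inv_nonneg.2 (hB.inv_nonneg k k)) (hB.inv_nonneg a k)
    · simp [v, Function.extend_apply' _ _ _ hi]
  have huv : 0 ≤ u - v := by
    refine hA.nonneg_of_mulVec_nonneg {f k} (fun i hi => ?_) (fun i hi => ?_)
    · rw [mulVec_sub, Pi.sub_apply, hAu i hi, zero_sub, neg_nonneg]
      by_cases hi' : ∃ a, f a = i
      · obtain ⟨a, rfl⟩ := hi'
        exact (hAv_range a (fun h => hi (h ▸ rfl))).le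
      · calc (A *ᵥ v) i ≤ A i i * v i := hA.mulVec_apply_le_mul_diag hv_nonneg i
          _ = 0 := by simp [v, Function.extend_apply' _ _ _ hi']
    · rw [Set.mem_singleton_iff.1 hi, Pi.sub_apply, hu_diag, hv_diag, sub_self]
  have hj := huv (f j)
  simp only [Pi.sub_apply, Pi.zero_apply, sub_nonneg, v, hf.extend_apply] at hj
  simpa [u, x, div_eq_inv_mul] using hj

end IsRowDominantZMatrix

theorem isRowDominantZMatrix_one_add_diagonal_sub_transpose [DecidableEq ι] {T : Matrix ι ι ℝ} {lam : ι → ℝ} (hT : ∀ i j, 0 ≤ T i j)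
    (hcol : ∀ i, ∑ j, T j i ≤ 1) (hlam : ∀ i, 0 < lam i) :
    (1 + diagonal lam - Tᵀ).IsRowDominantZMatrix where
  offDiag_nonpos i j hij := by simpa [one_apply_ne hij, diagonal_apply_ne _ hij] using hT j i
  sum_row_pos i := by
    have h : ∑ j, (1 + diagonal lam - Tᵀ) i j = 1 + lam i - ∑ j, T j i := by
      simp [Finset.sum_sub_distrib, Finset.sum_add_distrib, one_apply, diagonal_apply]
    linarith [hcol i, hlam i]

end Matrix

theorem stmt_7_general (n : ℕ) (T : Matrix (Fin n) (Fin n) ℝ) (lam : Fin n → ℝ)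
    (hT : ∀ i j, 0 ≤ T i j) (hcol : ∀ i, (∑ j, T j i) ≤ 1)
    (hlam : ∀ i, 0 < lam i)
    (P : Matrix (Fin n) (Fin n) ℝ)
    (hP : P = (1 + Matrix.diagonal lam - Tᵀ)⁻¹)
    (S : Finset (Fin n)) (k : Fin n) :
    ∀ j, indInf (1 + Matrix.diagonal lam - Tᵀ) S k j ≤ P j k / P k k := by
  intro j
  have hΓ := isRowDominantZMatrix_one_add_diagonal_sub_transpose hT hcol hlam
  rw [indInf, hP]
  split_ifs with h
  · exact hΓ.inv_submatrix_div_le Subtype.val_injective ⟨j, h.2⟩ ⟨k, h.1⟩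
  · exact div_nonneg (hΓ.inv_nonneg j k) (hΓ.inv_nonneg k k)

/-- Independent influence is dominated by unconditional influence:
`f_{kj}^{(S)} ≤ f_{kj} = p_{jk}/p_{kk}`. -/
theorem stmt_7 (n : ℕ) (T : Matrix (Fin n) (Fin n) ℝ) (lam : Fin n → ℝ)
    (hT : ∀ i j, 0 ≤ T i j) (hcol : ∀ i, (∑ j, T j i) ≤ 1)
    (hlam : ∀ i, 0 < lam i)
    (P : Matrix (Fin n) (Fin n) ℝ)
    (hinv : IsUnit (1 + Matrix.diagonal lam - Tᵀ))
    (hP : P = (1 + Matrix.diagonal lam - Tᵀ)⁻¹)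
    (S : Finset (Fin n)) (k : Fin n) (hk : k ∉ S) :
    ∀ j, indInf (1 + Matrix.diagonal lam - Tᵀ) S k j ≤ P j k / P k k :=
  stmt_7_general n T lam hT hcol hlam P hP S k
end

section
/- Monotonicity of independent influence in the seed set: if S₁ ⊆ S₂ and k ∉ S₂, then for every node j, f_{kj}^{(S₂)} ≤ f_{kj}^{(S₁)}. -/
open Finset Matrix

/-! For `u := indInf Γ S k`, with `k ∉ S`, the column `k` of `Γ_{S̄S̄}⁻¹` scaled to `u k = 1` and
extended by zero, satisfies `u = 0` on `S`, `u k = 1` and `(Γ u)_i = 0` for `i ∉ S ∪ {k}`.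
For `S₁ ⊆ S₂` the difference `d = u₁ - u₂` thus vanishes at `k`, equals `u₁ ≥ 0` on `S₂` and is
`Γ`-harmonic elsewhere. Since `Γ` has nonpositive off-diagonal entries and positive row sums, it
obeys a minimum principle: a vector whose negative entries all sit where `Γ d ≥ 0` is nonnegative.
The same principle gives invertibility of `Γ_{S̄S̄}` and nonnegativity of its inverse. -/

namespace Matrix

variable {ι : Type*} [Fintype ι]

/-- The strictly row diagonally dominant M-matrices. -/
structure IsDominantZMatrix (A : Matrix ι ι ℝ) : Prop where
  off_diag_nonpos : ∀ i j, i ≠ j → A i j ≤ 0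
  rowSum_pos : ∀ i, 0 < ∑ j, A i j

namespace IsDominantZMatrix

variable {A : Matrix ι ι ℝ}

theorem nonneg_of_mulVec (hA : A.IsDominantZMatrix) (d : ι → ℝ)
    (hd : ∀ i, d i < 0 → 0 ≤ (A *ᵥ d) i) : 0 ≤ d := by
  intro i
  by_contra! hi
  obtain ⟨m, -, hmin⟩ := exists_min_image univ d ⟨i, mem_univ i⟩
  have hm : d m < 0 := (hmin i (mem_univ i)).trans_lt hi
  have hAd : (A *ᵥ d) m ≤ (∑ j, A m j) * d m := by
    rw [mulVec, dotProduct, sum_mul]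
    refine sum_le_sum fun j _ => ?_
    rcases eq_or_ne m j with rfl | hmj
    · rfl
    · exact mul_le_mul_of_nonpos_left (hmin j (mem_univ j)) (hA.off_diag_nonpos m j hmj)
  exact (hAd.trans_lt (mul_neg_of_pos_of_neg (hA.rowSum_pos m) hm)).not_ge (hd m hm)

variable [DecidableEq ι]

theorem isUnit (hA : A.IsDominantZMatrix) : IsUnit A := by
  rw [← mulVec_injective_iff_isUnit]
  have hle (v w : ι → ℝ) (h : A *ᵥ v = A *ᵥ w) : w ≤ v :=
    sub_nonneg.mp <| hA.nonneg_of_mulVec _ fun i _ => by simp [mulVec_sub, h]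
  exact fun v w h => le_antisymm (hle w v h.symm) (hle v w h)

theorem isUnit_det (hA : A.IsDominantZMatrix) : IsUnit A.det :=
  (isUnit_iff_isUnit_det A).mp hA.isUnit

theorem inv_nonneg (hA : A.IsDominantZMatrix) (i j : ι) : 0 ≤ A⁻¹ i j :=
  hA.nonneg_of_mulVec (fun i => A⁻¹ i j) (fun l _ => by
    change 0 ≤ (A * A⁻¹) l j
    rw [mul_nonsing_inv A hA.isUnit_det, one_apply]
    split_ifs <;> norm_num) i

theorem inv_diag_ne_zero (hA : A.IsDominantZMatrix) (i : ι) : A⁻¹ i i ≠ 0 := by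
  intro h
  have hrow : (A * A⁻¹) i i ≤ A i i * A⁻¹ i i := by
    rw [mul_apply, ← add_sum_erase _ _ (mem_univ i)]
    refine add_le_of_nonpos_right (sum_nonpos fun l hl => ?_)
    exact mul_nonpos_of_nonpos_of_nonneg
      (hA.off_diag_nonpos i l (ne_of_mem_erase hl).symm) (hA.inv_nonneg l i)
  rw [mul_nonsing_inv A hA.isUnit_det, one_apply_eq, h, mul_zero] at hrow
  exact one_pos.not_ge hrow

theorem submatrix (hA : A.IsDominantZMatrix) {κ : Type*} [Fintype κ] {f : κ → ι}
    (hf : Function.Injective f) : (A.submatrix f f).IsDominantZMatrix where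
  off_diag_nonpos i j hij := hA.off_diag_nonpos (f i) (f j) (hf.ne hij)
  rowSum_pos i := by
    calc 0 < ∑ j, A (f i) j := hA.rowSum_pos (f i)
      _ ≤ ∑ j ∈ univ.image f, A (f i) j :=
        sum_le_sum_of_subset_of_nonpos' (subset_univ _) fun j _ hj =>
          hA.off_diag_nonpos _ _ fun h => hj (h ▸ mem_image_of_mem f (mem_univ i))
      _ = ∑ j, A (f i) (f j) := sum_image fun a _ b _ h => hf h

end IsDominantZMatrix

theorem isDominantZMatrix_one_add_diagonal_sub_transpose [DecidableEq ι] {T : Matrix ι ι ℝ}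
    {lam : ι → ℝ} (hT : ∀ i j, 0 ≤ T i j) (hcol : ∀ i, ∑ j, T j i ≤ 1) (hlam : ∀ i, 0 < lam i) :
    (1 + diagonal lam - Tᵀ).IsDominantZMatrix where
  off_diag_nonpos i j hij := by
    simpa [one_apply_ne hij, diagonal_apply_ne _ hij] using hT j i
  rowSum_pos i := by
    have hrow : ∑ j, (1 + diagonal lam - Tᵀ) i j = 1 + lam i - ∑ j, T j i := by
      simp [sum_add_distrib, sum_sub_distrib, one_apply, diagonal_apply]
    linarith [hcol i, hlam i]

end Matrix

section indInf

variable {n : ℕ} {Γ : Matrix (Fin n) (Fin n) ℝ} {S : Finset (Fin n)} {k : Fin n}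

theorem indInf_of_mem {j : Fin n} (hj : j ∈ S) : indInf Γ S k j = 0 :=
  dif_neg fun h => h.2 hj

theorem indInf_nonneg (hΓ : Γ.IsDominantZMatrix) (j : Fin n) : 0 ≤ indInf Γ S k j := by
  have hB := hΓ.submatrix (Subtype.val_injective (p := (· ∉ S)))
  rw [indInf]
  split_ifs
  exacts [div_nonneg (hB.inv_nonneg _ _) (hB.inv_nonneg _ _), le_rfl]

theorem indInf_self (hΓ : Γ.IsDominantZMatrix) (hk : k ∉ S) : indInf Γ S k k = 1 := by
  rw [indInf, dif_pos ⟨hk, hk⟩]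
  exact div_self ((hΓ.submatrix Subtype.val_injective).inv_diag_ne_zero _)

theorem mulVec_indInf_of_ne (hΓ : Γ.IsDominantZMatrix) (hk : k ∉ S) {i : Fin n} (hi : i ∉ S)
    (hik : i ≠ k) : (Γ *ᵥ indInf Γ S k) i = 0 := by
  let B : Matrix {i // i ∉ S} {i // i ∉ S} ℝ := Γ.submatrix Subtype.val Subtype.val
  have hBC : B * B⁻¹ = 1 := mul_nonsing_inv B (hΓ.submatrix Subtype.val_injective).isUnit_det
  rw [mulVec, dotProduct, ← Fintype.sum_subtype_add_sum_subtype (· ∉ S)]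
  have hout : ∑ j : {j // ¬j ∉ S}, Γ i j * indInf Γ S k j = 0 :=
    sum_eq_zero fun j _ => by rw [indInf_of_mem (not_not.mp j.2), mul_zero]
  have hin : ∑ j : {j // j ∉ S}, Γ i j * indInf Γ S k j
      = (B * B⁻¹) ⟨i, hi⟩ ⟨k, hk⟩ / B⁻¹ ⟨k, hk⟩ ⟨k, hk⟩ := by
    rw [mul_apply, sum_div]
    refine sum_congr rfl fun j _ => ?_
    rw [indInf, dif_pos ⟨hk, j.2⟩, mul_div_assoc]
    rfl
  rw [hout, hin, hBC, one_apply_ne fun h => hik (congrArg Subtype.val h), zero_div, add_zero]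

theorem indInf_le_of_subset (hΓ : Γ.IsDominantZMatrix) {S₁ S₂ : Finset (Fin n)} (hS : S₁ ⊆ S₂)
    (hk : k ∉ S₂) (j : Fin n) : indInf Γ S₂ k j ≤ indInf Γ S₁ k j := by
  have hk₁ : k ∉ S₁ := fun h => hk (hS h)
  refine sub_nonneg.mp (hΓ.nonneg_of_mulVec (indInf Γ S₁ k - indInf Γ S₂ k) (fun i hi => ?_) j)
  by_cases hi₂ : i ∈ S₂
  · simp only [Pi.sub_apply, indInf_of_mem hi₂, sub_zero] at hi
    exact absurd hi (indInf_nonneg hΓ i).not_gt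
  by_cases hik : i = k
  · simp [hik, indInf_self hΓ hk, indInf_self hΓ hk₁] at hi
  rw [mulVec_sub, Pi.sub_apply, mulVec_indInf_of_ne hΓ hk₁ (fun h => hi₂ (hS h)) hik,
    mulVec_indInf_of_ne hΓ hk hi₂ hik, sub_zero]

end indInf

/-- Monotonicity of independent influence in the seed set: if `S₁ ⊆ S₂` and `k ∉ S₂`,
then `f_{kj}^{(S₂)} ≤ f_{kj}^{(S₁)}` for every node `j`. -/
theorem stmt_8 (n : ℕ) (T : Matrix (Fin n) (Fin n) ℝ) (lam : Fin n → ℝ)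
    (hT : ∀ i j, 0 ≤ T i j) (hcol : ∀ i, (∑ j, T j i) ≤ 1)
    (hlam : ∀ i, 0 < lam i)
    (S₁ S₂ : Finset (Fin n)) (hS : S₁ ⊆ S₂) (k : Fin n) (hk : k ∉ S₂) :
    ∀ j, indInf (1 + Matrix.diagonal lam - Tᵀ) S₂ k j ≤
      indInf (1 + Matrix.diagonal lam - Tᵀ) S₁ k j :=
  indInf_le_of_subset (isDominantZMatrix_one_add_diagonal_sub_transpose hT hcol hlam) hS hk
end

section
/- Submodularity of the influence spread: if for all seed sets S₁ ⊆ S₂ and node s ∉ S₂ one has f_{sj}^{(S₁)} ≥ f_{sj}^{(S₂)} and f_{S₁j} ≤ f_{S₂j} for every j, and all quantities lie in [0,1], then σ(S₁ ∪ {s}) − σ(S₁) ≥ σ(S₂ ∪ {s}) − σ(S₂), where σ(S) = Σ_j f_{Sj} and f_{(S∪{s})j} = 1 − (1 − f_{Sj})(1 − f_{sj}^{(S)}). -/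
open Finset

theorem one_sub_one_sub_mul_one_sub_sub {R : Type*} [CommRing R] (a b : R) :
    1 - (1 - a) * (1 - b) - a = (1 - a) * b := by
  ring

theorem one_sub_one_sub_mul_one_sub_sub_le {R : Type*} [CommRing R] [PartialOrder R]
    [IsOrderedRing R] {a₁ a₂ b₁ b₂ : R} (ha : a₁ ≤ a₂) (ha₁ : a₁ ≤ 1)
    (hb₂ : 0 ≤ b₂) (hb : b₂ ≤ b₁) :
    1 - (1 - a₂) * (1 - b₂) - a₂ ≤ 1 - (1 - a₁) * (1 - b₁) - a₁ := by
  rw [one_sub_one_sub_mul_one_sub_sub, one_sub_one_sub_mul_one_sub_sub]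
  exact mul_le_mul (sub_le_sub_left ha 1) hb hb₂ (sub_nonneg.2 ha₁)

/-- Submodularity of the influence spread: under antitonicity of independent influence,
monotonicity of joint influence, and the update rule
`f_{(S∪{s})j} = 1 − (1 − f_{Sj})(1 − f_{sj}^{(S)})`, the spread `σ(S) = ∑_j f_{Sj}`
satisfies `σ(S₁ ∪ {s}) − σ(S₁) ≥ σ(S₂ ∪ {s}) − σ(S₂)` for `S₁ ⊆ S₂`, `s ∉ S₂`. -/
theorem stmt_12 (n : ℕ)
    (F : Finset (Fin n) → Fin n → ℝ)  -- joint influence f_{Sj}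
    (g : Fin n → Finset (Fin n) → Fin n → ℝ)  -- independent influence f_{sj}^{(S)}
    (hFrange : ∀ S j, 0 ≤ F S j ∧ F S j ≤ 1)
    (hgrange : ∀ s S j, s ∉ S → 0 ≤ g s S j ∧ g s S j ≤ 1)
    (hupd : ∀ (S : Finset (Fin n)) (s : Fin n) (j : Fin n), s ∉ S →
      F (insert s S) j = 1 - (1 - F S j) * (1 - g s S j))
    (hanti : ∀ (s : Fin n) (S₁ S₂ : Finset (Fin n)) (j : Fin n),
      S₁ ⊆ S₂ → s ∉ S₂ → g s S₂ j ≤ g s S₁ j)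
    (hmono : ∀ (S₁ S₂ : Finset (Fin n)) (j : Fin n), S₁ ⊆ S₂ → F S₁ j ≤ F S₂ j) :
    ∀ (S₁ S₂ : Finset (Fin n)) (s : Fin n), S₁ ⊆ S₂ → s ∉ S₂ →
      (∑ j, F (insert s S₂) j) - (∑ j, F S₂ j) ≤
        (∑ j, F (insert s S₁) j) - (∑ j, F S₁ j) := by
  intro S₁ S₂ s hsub hs
  have hs₁ : s ∉ S₁ := fun h => hs (hsub h)
  rw [← sum_sub_distrib, ← sum_sub_distrib]
  refine sum_le_sum fun j _ => ?_
  rw [hupd S₂ s j hs, hupd S₁ s j hs₁]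
  exact one_sub_one_sub_mul_one_sub_sub_le (hmono S₁ S₂ j hsub) (hFrange S₁ j).2
    (hgrange s S₂ j hs).1 (hanti s S₁ S₂ j hsub hs)
end
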